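/- Let (X_n) be a transient Markov chain on a countable state space started at x, and let K be a finite set of states. Define A_K = {z : P_z[H_K < ∞] ≥ 1/2}, where H_K is the hitting time of K. Then almost surely the chain visits A_K only finitely many times. -/

import Mathlib

/-!
Let `A` be the set of states from which `K` is hit with probability at least `1/2`. By the
Markov property at the first visit to `A` after time `n`, such a visit is followed by a visit
to `K` with probability at least `1/2`, so
`P(A is visited infinitely often) / 2 ≤ P(K is visited after time n)` for every `n`.
As `n → ∞` the right side decreases to `P(K is visited infinitely often)`, which vanishes
by transience because `K` is finite.
-/

open MeasureTheory

namespace MarkovChain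

variable {α : Type*}

def shift (m : ℕ) (w : ℕ → α) : ℕ → α := fun k => w (m + k)

def initSeg (m : ℕ) (w : ℕ → α) : Fin (m + 1) → α := fun i => w i

lemma shift_shift (m n : ℕ) (w : ℕ → α) : shift m (shift n w) = shift (n + m) w := by
  funext k
  simp only [shift, Nat.add_assoc]

lemma initSeg_succ_eq_iff {n : ℕ} {w : ℕ → α} {c : Fin (n + 2) → α} :
    initSeg (n + 1) w = c ↔ initSeg n w = Fin.init c ∧ w (n + 1) = c (Fin.last _) := by
  simp only [funext_iff, Fin.forall_fin_succ' (n := n + 1), initSeg, Fin.init, Fin.val_castSucc,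
    Fin.val_last]

lemma initSeg_zero_eq_iff {w : ℕ → α} {c : Fin 1 → α} : initSeg 0 w = c ↔ w 0 = c 0 := by
  simp [funext_iff, Fin.forall_fin_one, initSeg]

lemma initSeg_eq_initSeg_iff {m : ℕ} {w w' : ℕ → α} :
    initSeg m w = initSeg m w' ↔ ∀ i ≤ m, w i = w' i := by
  simp only [funext_iff, initSeg, Fin.forall_iff, Nat.lt_succ_iff]

lemma preimage_initSeg_image_eq {m : ℕ} {D : Set (ℕ → α)}
    (hD : DependsOn (· ∈ D) (Set.Iic m)) : initSeg m ⁻¹' (initSeg m '' D) = D := by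
  refine (Set.subset_preimage_image _ _).antisymm' ?_
  rintro w ⟨w', hw', heq⟩
  exact (hD (initSeg_eq_initSeg_iff.1 heq)).mp hw'

variable [MeasurableSpace α]

lemma measurable_shift (m : ℕ) : Measurable (shift m : (ℕ → α) → ℕ → α) :=
  measurable_pi_lambda _ fun _ => measurable_pi_apply _

lemma measurable_initSeg (m : ℕ) : Measurable (initSeg m : (ℕ → α) → Fin (m + 1) → α) :=
  measurable_pi_lambda _ fun _ => measurable_pi_apply _

lemma measurableSet_of_dependsOn_mem [Countable α] [MeasurableSingletonClass α] {m : ℕ}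
    {D : Set (ℕ → α)} (hD : DependsOn (· ∈ D) (Set.Iic m)) : MeasurableSet D :=
  preimage_initSeg_image_eq hD ▸ measurable_initSeg m (Set.to_countable _).measurableSet

def IsMarkovFamily (μ : α → Measure (ℕ → α)) : Prop :=
  ∀ (z : α) (n : ℕ) (y : α) (S : Set (ℕ → α)), MeasurableSet S →
    μ z ({w | w n = y} ∩ shift n ⁻¹' S) = μ z {w | w n = y} * μ y S

variable {μ : α → Measure (ℕ → α)}

lemma IsMarkovFamily.measure_initSeg_preimage_inter_shift [MeasurableSingletonClass α]
    (hμ : IsMarkovFamily μ) (z : α) {n : ℕ} (c : Fin (n + 1) → α) {S : Set (ℕ → α)}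
    (hS : MeasurableSet S) :
    μ z (initSeg n ⁻¹' {c} ∩ shift n ⁻¹' S) =
      μ z (initSeg n ⁻¹' {c}) * μ (c (Fin.last n)) S := by
  induction n generalizing S with
  | zero =>
    have hcyl : initSeg 0 ⁻¹' {c} = {w | w 0 = c 0} := by ext; simp [initSeg_zero_eq_iff]
    rw [hcyl]
    exact hμ z 0 (c 0) S hS
  | succ n ih =>
    have hcyl : initSeg (n + 1) ⁻¹' {c} =
        initSeg n ⁻¹' {Fin.init c} ∩ shift n ⁻¹' {v | v 1 = c (Fin.last _)} := by
      ext; simp [initSeg_succ_eq_iff, shift]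
    have hshift : shift (n + 1) ⁻¹' S = shift n ⁻¹' (shift 1 ⁻¹' S) := by
      rw [← Set.preimage_comp]; ext; simp [shift_shift]
    have hstep := hμ (c (Fin.last n).castSucc) 1 (c (Fin.last _)) S hS
    have hy : MeasurableSet {v : ℕ → α | v 1 = c (Fin.last _)} :=
      measurable_pi_apply 1 (measurableSet_singleton _)
    rw [hcyl, hshift, Set.inter_assoc, ← Set.preimage_inter,
      ih _ (hy.inter (measurable_shift 1 hS)), ih _ hy]
    exact (congrArg _ hstep).trans (mul_assoc _ _ _).symm

lemma IsMarkovFamily.mul_le_measure_inter_shift [Countable α] [MeasurableSingletonClass α]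
    (hμ : IsMarkovFamily μ) (z : α) {m : ℕ} {D : Set (ℕ → α)}
    (hD : DependsOn (· ∈ D) (Set.Iic m)) {A : Set α} (hDA : ∀ w ∈ D, w m ∈ A)
    {S : Set (ℕ → α)} (hS : MeasurableSet S) {ε : ENNReal} (hε : ∀ y ∈ A, ε ≤ μ y S) :
    μ z D * ε ≤ μ z (D ∩ shift m ⁻¹' S) := by
  have hP := Set.to_countable (initSeg m '' D)
  have hfiber : ∀ c ∈ initSeg m '' D, MeasurableSet (initSeg m ⁻¹' {c}) :=
    fun c _ => measurable_initSeg m (measurableSet_singleton c)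
  have hlast : ∀ c ∈ initSeg m '' D, c (Fin.last m) ∈ A := by
    rintro _ ⟨w, hw, rfl⟩
    exact hDA w hw
  have hE := measurable_shift m hS
  rw [← preimage_initSeg_image_eq hD, ← tsum_measure_preimage_singleton hP hfiber,
    ← Measure.restrict_apply' hE, ← tsum_measure_preimage_singleton hP hfiber,
    ← ENNReal.tsum_mul_right]
  refine ENNReal.tsum_le_tsum fun c => ?_
  rw [Measure.restrict_apply' hE,
    hμ.measure_initSeg_preimage_inter_shift z (c : Fin (m + 1) → α) hS]
  exact mul_le_mul_right (hε _ (hlast c c.2)) _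

lemma IsMarkovFamily.mul_le_measure_exists_shift [Countable α] [MeasurableSingletonClass α]
    (hμ : IsMarkovFamily μ) (z : α) (n : ℕ) {A : Set α} {S : Set (ℕ → α)}
    (hS : MeasurableSet S) {ε : ENNReal} (hε : ∀ y ∈ A, ε ≤ μ y S) :
    μ z {w | ∃ m ≥ n, w m ∈ A} * ε ≤ μ z {w | ∃ m ≥ n, shift m w ∈ S} := by
  set E : ℕ → Set (ℕ → α) := fun m =>
    {w | n ≤ m ∧ w m ∈ A ∧ ∀ k, n ≤ k → k < m → w k ∉ A}
  have hEdet : ∀ m, DependsOn (· ∈ E m) (Set.Iic m) := by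
    intro m w w' h
    have hk : ∀ k < m, w k = w' k := fun k hk => h k (Set.mem_Iic.2 hk.le)
    simp +contextual [E, h m (Set.mem_Iic.2 le_rfl), hk]
  have hEmeas : ∀ m, MeasurableSet (E m) := fun m => measurableSet_of_dependsOn_mem (hEdet m)
  have hEdisj : Pairwise (Function.onFun Disjoint E) := by
    intro m m' hne
    refine Set.disjoint_left.2 fun w ⟨hnm, hA, hmin⟩ ⟨hnm', hA', hmin'⟩ => ?_
    rcases hne.lt_or_gt with h | h
    · exact hmin' m hnm h hA
    · exact hmin m' hnm' h hA'
  have hunion : {w | ∃ m ≥ n, w m ∈ A} = ⋃ m, E m := by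
    ext w
    simp only [Set.mem_ofPred_eq, Set.mem_iUnion]
    refine ⟨fun h => ?_, fun ⟨m, hnm, hA, _⟩ => ⟨m, hnm, hA⟩⟩
    classical
    exact ⟨Nat.find h, (Nat.find_spec h).1, (Nat.find_spec h).2,
      fun k hnk hk hA => Nat.find_min h hk ⟨hnk, hA⟩⟩
  calc μ z {w | ∃ m ≥ n, w m ∈ A} * ε = ∑' m, μ z (E m) * ε := by
        rw [hunion, measure_iUnion hEdisj hEmeas, ENNReal.tsum_mul_right]
    _ ≤ ∑' m, μ z (E m ∩ shift m ⁻¹' S) := ENNReal.tsum_le_tsum fun m =>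
        hμ.mul_le_measure_inter_shift z (hEdet m) (fun _ hw => hw.2.1) hS hε
    _ = μ z (⋃ m, E m ∩ shift m ⁻¹' S) := by
        refine (measure_iUnion (fun m m' hne => ?_) fun m => ?_).symm
        · exact (hEdisj hne).mono Set.inter_subset_left Set.inter_subset_left
        · exact (hEmeas m).inter (measurable_shift m hS)
    _ ≤ μ z {w | ∃ m ≥ n, shift m w ∈ S} :=
        measure_mono (Set.iUnion_subset fun m _ hw => ⟨m, hw.1.1, hw.2⟩)

lemma measure_setOf_infinite_mem_eq_zero {ν : Measure (ℕ → α)} {K : Set α} (hK : K.Finite)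
    (h : ∀ y ∈ K, ν {w | {n | w n = y}.Infinite} = 0) :
    ν {w | {n | w n ∈ K}.Infinite} = 0 := by
  refine measure_mono_null (fun w hw => ?_) ((measure_biUnion_null_iff hK.countable).2 h)
  by_contra hnot
  simp only [Set.mem_iUnion, not_exists, Set.mem_ofPred_eq, Set.not_infinite] at hnot
  have hvisits : {n | w n ∈ K} = ⋃ y ∈ K, {n | w n = y} := by ext; simp
  exact hw (hvisits ▸ hK.biUnion fun y hy => hnot y hy)

lemma iInf_measure_exists_ge_mem {ν : Measure (ℕ → α)} [IsFiniteMeasure ν] {B : Set α}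
    (hB : MeasurableSet B) :
    ⨅ n, ν {w | ∃ m ≥ n, w m ∈ B} = ν {w | {m | w m ∈ B}.Infinite} := by
  have hmeas : ∀ n, MeasurableSet {w : ℕ → α | ∃ m ≥ n, w m ∈ B} := fun n => by
    simp only [Set.ofPred_exists]
    exact .iUnion fun m => (MeasurableSet.const (n ≤ m)).inter (measurable_pi_apply m hB)
  have hanti : Antitone fun n => {w : ℕ → α | ∃ m ≥ n, w m ∈ B} :=
    fun n n' h w ⟨m, hm, hwm⟩ => ⟨m, h.trans hm, hwm⟩
  rw [← hanti.measure_iInter (fun n => (hmeas n).nullMeasurableSet) ⟨0, measure_ne_top _ _⟩]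
  congr 1
  ext w
  simp only [Set.mem_iInter, Set.mem_ofPred_eq, ← Nat.frequently_atTop_iff_infinite,
    Filter.frequently_atTop]

lemma IsMarkovFamily.measure_infinite_visits_eq_zero [Countable α] [MeasurableSingletonClass α]
    (hμ : IsMarkovFamily μ) (z : α) [IsFiniteMeasure (μ z)] {A K : Set α} {ε : ENNReal}
    (hε0 : ε ≠ 0) (hε : ∀ y ∈ A, ε ≤ μ y {w | ∃ m, w m ∈ K})
    (hK : μ z {w | {n | w n ∈ K}.Infinite} = 0) :
    μ z {w | {n | w n ∈ A}.Infinite} = 0 := by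
  have hKmeas : MeasurableSet K := (Set.to_countable K).measurableSet
  have hhit : MeasurableSet {w : ℕ → α | ∃ m, w m ∈ K} := by
    simp only [Set.ofPred_exists]
    exact .iUnion fun m => measurable_pi_apply m hKmeas
  have hle : μ z {w | {n | w n ∈ A}.Infinite} * ε ≤ ⨅ n, μ z {w | ∃ m ≥ n, w m ∈ K} :=
    le_iInf fun n => calc
      _ ≤ μ z {w | ∃ m ≥ n, w m ∈ A} * ε := by
          refine mul_le_mul_left (measure_mono fun w hw => ?_) _
          obtain ⟨m, hm, hnm⟩ := hw.exists_gt n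
          exact ⟨m, hnm.le, hm⟩
      _ ≤ μ z {w | ∃ m ≥ n, shift m w ∈ {w' | ∃ m, w' m ∈ K}} :=
          hμ.mul_le_measure_exists_shift z n hhit hε
      _ ≤ μ z {w | ∃ m ≥ n, w m ∈ K} :=
          measure_mono fun w ⟨m, hm, j, hj⟩ => ⟨m + j, le_add_right hm, hj⟩
  rw [iInf_measure_exists_ge_mem hKmeas, hK, nonpos_iff_eq_zero, mul_eq_zero] at hle
  exact hle.resolve_right hε0

end MarkovChain

theorem stmt9_general {α : Type*} [Countable α] [MeasurableSpace α]
    [MeasurableSingletonClass α]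
    (μ : α → Measure (ℕ → α)) (hprob : ∀ z, IsProbabilityMeasure (μ z))
    (hmarkov : ∀ (z : α) (n : ℕ) (y : α) (S : Set (ℕ → α)), MeasurableSet S →
      μ z {w | w n = y ∧ (fun k => w (n + k)) ∈ S} = μ z {w | w n = y} * μ y S)
    (htrans : ∀ z y : α, μ z {w | {n | w n = y}.Infinite} = 0)
    (x : α) (K : Set α) (hK : K.Finite) :
    μ x {w | {n | (1 : ENNReal) / 2 ≤ μ (w n) {w' | ∃ m, w' m ∈ K}}.Infinite} = 0 := by
  have hμ : MarkovChain.IsMarkovFamily μ := hmarkov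
  have := hprob x
  exact hμ.measure_infinite_visits_eq_zero x (A := {z | 1 / 2 ≤ μ z {w' | ∃ m, w' m ∈ K}})
    (by norm_num) (fun _ hy => hy)
    (MarkovChain.measure_setOf_infinite_mem_eq_zero hK fun y _ => htrans x y)

/-- Let `(μ_z)` be the path-space laws of a transient Markov chain on a countable
state space (Markov property at deterministic times, each state visited finitely
often a.s.). For a finite set `K`, the set `A_K = {z : P_z[H_K < ∞] ≥ 1/2}` is
almost surely visited only finitely many times by the chain started at `x`. -/
theorem stmt9 {α : Type*} [Countable α] [MeasurableSpace α]
    [MeasurableSingletonClass α]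
    (μ : α → Measure (ℕ → α)) (hprob : ∀ z, IsProbabilityMeasure (μ z))
    (hstart : ∀ z, μ z {w | w 0 = z} = 1)
    (hmarkov : ∀ (z : α) (n : ℕ) (y : α) (S : Set (ℕ → α)), MeasurableSet S →
      μ z {w | w n = y ∧ (fun k => w (n + k)) ∈ S} = μ z {w | w n = y} * μ y S)
    (htrans : ∀ z y : α, μ z {w | {n | w n = y}.Infinite} = 0)
    (x : α) (K : Set α) (hK : K.Finite) :
    μ x {w | {n | (1 : ENNReal) / 2 ≤ μ (w n) {w' | ∃ m, w' m ∈ K}}.Infinite} = 0 :=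
  stmt9_general μ hprob hmarkov htrans x K hK
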